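/- Fix a pmf ρ on X0 and a channel Γ : X1 → (pmf on Y). The feasible set of the optimization problem of Section III-B, namely the set of (ρ,Γ)-admissible pmfs Q on X0 × X1 × X2 × Y satisfying the information constraint Φ(Q) = I_Q(X0;X2) − I_Q(X1;Y|X0,X2) ≤ 0, is a convex subset of the space of functions X0 × X1 × X2 × Y → ℝ; consequently, for any payoff function w : X0 × X1 × X2 → ℝ, maximizing the expected payoff E_Q[w] = ∑_{x0,x1,x2,y} Q(x0,x1,x2,y)·w(x0,x1,x2) over this set is a convex optimization problem (linear objective over a convex set). -/

import Mathlib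

open scoped BigOperators

/-- A probability mass function on a finite set. -/
def IsPmf {S : Type*} [Fintype S] (q : S → ℝ) : Prop :=
  (∀ s, 0 ≤ q s) ∧ ∑ s, q s = 1

section Defs

variable {X0 X1 X2 Y : Type*} [Fintype X0] [Fintype X1] [Fintype X2] [Fintype Y]

/-- Marginal on `X0`. -/
noncomputable def margX0 (Q : X0 × X1 × X2 × Y → ℝ) (x0 : X0) : ℝ :=
  ∑ x1, ∑ x2, ∑ y, Q (x0, x1, x2, y)

/-- Marginal on `X2`. -/
noncomputable def margX2 (Q : X0 × X1 × X2 × Y → ℝ) (x2 : X2) : ℝ :=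
  ∑ x0, ∑ x1, ∑ y, Q (x0, x1, x2, y)

/-- Marginal on `(X0, X2)`. -/
noncomputable def margX0X2 (Q : X0 × X1 × X2 × Y → ℝ) (x0 : X0) (x2 : X2) : ℝ :=
  ∑ x1, ∑ y, Q (x0, x1, x2, y)

/-- Marginal on `(X0, X2, Y)`. -/
noncomputable def margX0X2Y (Q : X0 × X1 × X2 × Y → ℝ) (x0 : X0) (x2 : X2) (y : Y) : ℝ :=
  ∑ x1, Q (x0, x1, x2, y)

/-- Marginal on `(X0, X1, X2)`. -/
noncomputable def margX0X1X2 (Q : X0 × X1 × X2 × Y → ℝ) (x0 : X0) (x1 : X1) (x2 : X2) : ℝ :=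
  ∑ y, Q (x0, x1, x2, y)

/-- Entropy `H_Q(X0)` (natural log, `0 log 0 = 0` holds by `Real.log 0 = 0`). -/
noncomputable def H_X0 (Q : X0 × X1 × X2 × Y → ℝ) : ℝ :=
  -∑ x0, margX0 Q x0 * Real.log (margX0 Q x0)

/-- Entropy `H_Q(X2)`. -/
noncomputable def H_X2 (Q : X0 × X1 × X2 × Y → ℝ) : ℝ :=
  -∑ x2, margX2 Q x2 * Real.log (margX2 Q x2)

/-- Joint entropy `H_Q(X0, X2)`. -/
noncomputable def H_X0X2 (Q : X0 × X1 × X2 × Y → ℝ) : ℝ :=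
  -∑ x0, ∑ x2, margX0X2 Q x0 x2 * Real.log (margX0X2 Q x0 x2)

/-- Conditional entropy `H_Q(Y, X0 | X2)` (terms with zero mass contribute `0`
since `0 * log _ = 0` and `Real.log 0 = 0`, `0 / 0 = 0`). -/
noncomputable def HcondYX0_X2 (Q : X0 × X1 × X2 × Y → ℝ) : ℝ :=
  -∑ x0, ∑ x2, ∑ y,
    margX0X2Y Q x0 x2 y * Real.log (margX0X2Y Q x0 x2 y / margX2 Q x2)

/-- Conditional entropy `H_Q(Y | X0, X2)`. -/
noncomputable def HcondY_X0X2 (Q : X0 × X1 × X2 × Y → ℝ) : ℝ :=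
  -∑ x0, ∑ x2, ∑ y,
    margX0X2Y Q x0 x2 y * Real.log (margX0X2Y Q x0 x2 y / margX0X2 Q x0 x2)

/-- Conditional entropy `H_Q(Y | X0, X1, X2)`. -/
noncomputable def HcondY_X0X1X2 (Q : X0 × X1 × X2 × Y → ℝ) : ℝ :=
  -∑ x0, ∑ x1, ∑ x2, ∑ y,
    Q (x0, x1, x2, y) * Real.log (Q (x0, x1, x2, y) / margX0X1X2 Q x0 x1 x2)

/-- Mutual information `I_Q(X0; X2) = H(X0) + H(X2) - H(X0, X2)`. -/
noncomputable def mutI_X0X2 (Q : X0 × X1 × X2 × Y → ℝ) : ℝ :=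
  H_X0 Q + H_X2 Q - H_X0X2 Q

/-- Conditional mutual information `I_Q(X1; Y | X0, X2)`. -/
noncomputable def condMutI_X1Y_X0X2 (Q : X0 × X1 × X2 × Y → ℝ) : ℝ :=
  HcondY_X0X2 Q - HcondY_X0X1X2 Q

/-- `Φ(Q) = I_Q(X0; X2) - I_Q(X1; Y | X0, X2)`. -/
noncomputable def Phi (Q : X0 × X1 × X2 × Y → ℝ) : ℝ :=
  mutI_X0X2 Q - condMutI_X1Y_X0X2 Q

/-- A channel `Γ : X1 → Δ(Y)`. -/
def IsChannel (Γ : X1 → Y → ℝ) : Prop :=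
  ∀ x1, (∀ y, 0 ≤ Γ x1 y) ∧ ∑ y, Γ x1 y = 1

/-- `(ρ, Γ)`-admissibility: `Q` is a pmf whose `X0`-marginal is `ρ` and which
factorizes through the channel `Γ`. -/
def IsAdmissible (ρ : X0 → ℝ) (Γ : X1 → Y → ℝ) (Q : X0 × X1 × X2 × Y → ℝ) : Prop :=
  IsPmf Q ∧ (∀ x0, margX0 Q x0 = ρ x0) ∧
    ∀ x0 x1 x2 y, Q (x0, x1, x2, y) = Γ x1 y * margX0X1X2 Q x0 x1 x2

end Defs


/-!
On admissible `Q` the chain rule rewrites `Φ(Q)` as `H(X0) - H(X0,Y | X2) + H(Y | X0,X1,X2)`.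
The first term is the constant `H(ρ)`, and the factorization through `Γ` makes the last one
the linear function `-∑ Q log Γ`. The middle term is `-∑ m log (m / n)` with `m`, `n` the linear
marginals `Q(x0,x2,y)` and `Q(x2)`, so `-H(X0,Y | X2)` is convex by the joint convexity of
`(a, b) ↦ a log (a / b)` (the log-sum inequality). Hence `Φ` is convex on the convex admissible
set and `{Φ ≤ 0}` is a sublevel set of a convex function.
-/

open Finset Real

lemma mul_log_div_mul_left (s a b : ℝ) :
    s * a * log (s * a / (s * b)) = s * (a * log (a / b)) := by
  rcases eq_or_ne s 0 with rfl | hs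
  · simp
  · rw [mul_div_mul_left _ _ hs]; ring

lemma convexOn_mul_log_div :
    ConvexOn ℝ {p : ℝ × ℝ | 0 ≤ p.1 ∧ p.1 ≤ p.2} fun p => p.1 * log (p.1 / p.2) := by
  refine ⟨?_, ?_⟩
  · rintro ⟨a₁, b₁⟩ ⟨ha₁ : 0 ≤ a₁, hab₁ : a₁ ≤ b₁⟩ ⟨a₂, b₂⟩ ⟨ha₂ : 0 ≤ a₂, hab₂ : a₂ ≤ b₂⟩
      t s ht hs -
    simp only [Prod.smul_mk, Prod.mk_add_mk, smul_eq_mul]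
    constructor <;> nlinarith
  rintro ⟨a₁, b₁⟩ ⟨ha₁ : 0 ≤ a₁, hab₁ : a₁ ≤ b₁⟩ ⟨a₂, b₂⟩ ⟨ha₂ : 0 ≤ a₂, hab₂ : a₂ ≤ b₂⟩
    t s ht hs hts
  simp only [Prod.smul_mk, Prod.mk_add_mk, smul_eq_mul]
  rcases (ha₁.trans hab₁).eq_or_lt with rfl | hb₁
  · obtain rfl : a₁ = 0 := le_antisymm hab₁ ha₁
    simp [mul_log_div_mul_left]
  rcases (ha₂.trans hab₂).eq_or_lt with rfl | hb₂
  · obtain rfl : a₂ = 0 := le_antisymm hab₂ ha₂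
    simp [mul_log_div_mul_left]
  set c := t * b₁ + s * b₂
  have hc : 0 < c := by
    rcases ht.eq_or_lt with rfl | ht'
    · simp [c, show s = 1 by linarith, hb₂]
    · positivity
  have hcomb : t * b₁ / c * (a₁ / b₁) + s * b₂ / c * (a₂ / b₂) = (t * a₁ + s * a₂) / c := by
    field_simp
  have hφ := convexOn_mul_log.2 (Set.mem_Ici.2 (div_nonneg ha₁ hb₁.le))
    (Set.mem_Ici.2 (div_nonneg ha₂ hb₂.le)) (by positivity : 0 ≤ t * b₁ / c)
    (by positivity : 0 ≤ s * b₂ / c) (by rw [← add_div, div_self hc.ne'])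
  simp only [smul_eq_mul, hcomb] at hφ
  calc (t * a₁ + s * a₂) * log ((t * a₁ + s * a₂) / c)
      = c * ((t * a₁ + s * a₂) / c * log ((t * a₁ + s * a₂) / c)) := by field_simp
    _ ≤ c * (t * b₁ / c * (a₁ / b₁ * log (a₁ / b₁)) + s * b₂ / c * (a₂ / b₂ * log (a₂ / b₂))) :=
        mul_le_mul_of_nonneg_left hφ hc.le
    _ = t * (a₁ * log (a₁ / b₁)) + s * (a₂ * log (a₂ / b₂)) := by field_simp

lemma sum_mul_log_div_sum {ι : Type*} [Fintype ι] (a : ι → ℝ) (ha : 0 ≤ a) :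
    ∑ i, a i * log (a i / ∑ j, a j) = ∑ i, a i * log (a i) - (∑ i, a i) * log (∑ i, a i) := by
  rw [sum_mul, ← sum_sub_distrib]
  refine sum_congr rfl fun i _ => ?_
  rcases (ha i).eq_or_lt with h | h
  · simp [← h]
  · have hsum : 0 < ∑ j, a j := h.trans_le (single_le_sum (fun j _ => ha j) (mem_univ i))
    rw [log_div h.ne' hsum.ne', mul_sub]

lemma isLinearMap_sum_mul {X0 X1 X2 Y : Type*} [Fintype X0] [Fintype X1] [Fintype X2]
    [Fintype Y] (v : X0 → X1 → X2 → Y → ℝ) :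
    IsLinearMap ℝ fun Q : X0 × X1 × X2 × Y → ℝ =>
      ∑ x0, ∑ x1, ∑ x2, ∑ y, Q (x0, x1, x2, y) * v x0 x1 x2 y where
  map_add Q₁ Q₂ := by simp [add_mul, sum_add_distrib]
  map_smul c Q := by simp [mul_sum, mul_assoc]

section Marginals

variable {X0 X1 X2 Y : Type*} (Q Q₁ Q₂ : X0 × X1 × X2 × Y → ℝ) (a b : ℝ)

lemma margX0_smul_add_smul [Fintype X1] [Fintype X2] [Fintype Y] (x0 : X0) :
    margX0 (a • Q₁ + b • Q₂) x0 = a * margX0 Q₁ x0 + b * margX0 Q₂ x0 := by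
  simp [margX0, sum_add_distrib, mul_sum]

lemma margX2_smul_add_smul [Fintype X0] [Fintype X1] [Fintype Y] (x2 : X2) :
    margX2 (a • Q₁ + b • Q₂) x2 = a * margX2 Q₁ x2 + b * margX2 Q₂ x2 := by
  simp [margX2, sum_add_distrib, mul_sum]

lemma margX0X2Y_smul_add_smul [Fintype X1] (x0 : X0) (x2 : X2) (y : Y) :
    margX0X2Y (a • Q₁ + b • Q₂) x0 x2 y = a * margX0X2Y Q₁ x0 x2 y + b * margX0X2Y Q₂ x0 x2 y := by
  simp [margX0X2Y, sum_add_distrib, mul_sum]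

lemma margX0X1X2_smul_add_smul [Fintype Y] (x0 : X0) (x1 : X1) (x2 : X2) :
    margX0X1X2 (a • Q₁ + b • Q₂) x0 x1 x2
      = a * margX0X1X2 Q₁ x0 x1 x2 + b * margX0X1X2 Q₂ x0 x1 x2 := by
  simp [margX0X1X2, sum_add_distrib, mul_sum]

lemma sum_margX0X2Y [Fintype X1] [Fintype Y] (x0 : X0) (x2 : X2) :
    ∑ y, margX0X2Y Q x0 x2 y = margX0X2 Q x0 x2 :=
  sum_comm

lemma margX2_eq_sum_margX0X2Y [Fintype X0] [Fintype X1] [Fintype Y] (x2 : X2) :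
    margX2 Q x2 = ∑ p : X0 × Y, margX0X2Y Q p.1 x2 p.2 := by
  rw [Fintype.sum_prod_type]
  exact sum_congr rfl fun _ _ => sum_comm

variable {Q}

lemma margX0X2Y_nonneg [Fintype X1] (hQ : 0 ≤ Q) (x0 : X0) (x2 : X2) (y : Y) :
    0 ≤ margX0X2Y Q x0 x2 y :=
  sum_nonneg fun _ _ => hQ _

lemma margX0X2Y_le_margX2 [Fintype X0] [Fintype X1] [Fintype Y] (hQ : 0 ≤ Q) (x0 : X0) (x2 : X2)
    (y : Y) : margX0X2Y Q x0 x2 y ≤ margX2 Q x2 := by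
  rw [margX2_eq_sum_margX0X2Y]
  exact single_le_sum (f := fun p : X0 × Y => margX0X2Y Q p.1 x2 p.2)
    (fun p _ => margX0X2Y_nonneg hQ _ _ _) (mem_univ (x0, y))

end Marginals

section Entropy

variable {X0 X1 X2 Y : Type*} [Fintype X0] [Fintype X1] [Fintype X2] [Fintype Y]

noncomputable def H_X0X2Y (Q : X0 × X1 × X2 × Y → ℝ) : ℝ :=
  -∑ x0, ∑ x2, ∑ y, margX0X2Y Q x0 x2 y * log (margX0X2Y Q x0 x2 y)

lemma HcondY_X0X2_eq {Q : X0 × X1 × X2 × Y → ℝ} (hQ : 0 ≤ Q) :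
    HcondY_X0X2 Q = H_X0X2Y Q - H_X0X2 Q := by
  have hfiber (x0 : X0) (x2 : X2) : ∑ y, margX0X2Y Q x0 x2 y *
      log (margX0X2Y Q x0 x2 y / margX0X2 Q x0 x2) = ∑ y, margX0X2Y Q x0 x2 y *
      log (margX0X2Y Q x0 x2 y) - margX0X2 Q x0 x2 * log (margX0X2 Q x0 x2) := by
    have h := sum_mul_log_div_sum _ fun y => margX0X2Y_nonneg hQ x0 x2 y
    rwa [sum_margX0X2Y] at h
  simp only [HcondY_X0X2, H_X0X2Y, H_X0X2, hfiber, sum_sub_distrib]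
  ring

lemma HcondYX0_X2_eq {Q : X0 × X1 × X2 × Y → ℝ} (hQ : 0 ≤ Q) :
    HcondYX0_X2 Q = H_X0X2Y Q - H_X2 Q := by
  have hfiber (x2 : X2) : ∑ x0, ∑ y, margX0X2Y Q x0 x2 y *
      log (margX0X2Y Q x0 x2 y / margX2 Q x2) = ∑ x0, ∑ y, margX0X2Y Q x0 x2 y *
      log (margX0X2Y Q x0 x2 y) - margX2 Q x2 * log (margX2 Q x2) := by
    have h := sum_mul_log_div_sum (fun p : X0 × Y => margX0X2Y Q p.1 x2 p.2)
      fun p => margX0X2Y_nonneg hQ _ _ _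
    beta_reduce at h
    rw [← margX2_eq_sum_margX0X2Y] at h
    simpa only [Fintype.sum_prod_type] using h
  simp only [HcondYX0_X2, H_X0X2Y, H_X2, hfiber, sum_sub_distrib,
    sum_comm (s := (univ : Finset X0)) (t := (univ : Finset X2))]
  ring

lemma Phi_eq_H_X0_sub_HcondYX0_X2_add_HcondY_X0X1X2 {Q : X0 × X1 × X2 × Y → ℝ} (hQ : 0 ≤ Q) :
    Phi Q = H_X0 Q - HcondYX0_X2 Q + HcondY_X0X1X2 Q := by
  rw [Phi, mutI_X0X2, condMutI_X1Y_X0X2, HcondY_X0X2_eq hQ, HcondYX0_X2_eq hQ]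
  ring

lemma HcondY_X0X1X2_eq_neg_sum_mul_log {Q : X0 × X1 × X2 × Y → ℝ} {Γ : X1 → Y → ℝ}
    (hΓ : ∀ x0 x1 x2 y, Q (x0, x1, x2, y) = Γ x1 y * margX0X1X2 Q x0 x1 x2) :
    HcondY_X0X1X2 Q = -∑ x0, ∑ x1, ∑ x2, ∑ y, Q (x0, x1, x2, y) * log (Γ x1 y) := by
  rw [HcondY_X0X1X2]
  congr 1
  refine sum_congr rfl fun x0 _ => sum_congr rfl fun x1 _ =>
    sum_congr rfl fun x2 _ => sum_congr rfl fun y _ => ?_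
  rw [hΓ x0 x1 x2 y]
  rcases eq_or_ne (margX0X1X2 Q x0 x1 x2) 0 with h | h
  · simp [h]
  · rw [mul_div_cancel_right₀ _ h]

lemma convexOn_neg_HcondYX0_X2 :
    ConvexOn ℝ (Set.Ici (0 : X0 × X1 × X2 × Y → ℝ)) fun Q => -HcondYX0_X2 Q := by
  refine ⟨convex_Ici 0, fun Q₁ hQ₁ Q₂ hQ₂ a b ha hb hab => ?_⟩
  have hmem {Q : X0 × X1 × X2 × Y → ℝ} (hQ : 0 ≤ Q) (x0 : X0) (x2 : X2) (y : Y) :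
      (margX0X2Y Q x0 x2 y, margX2 Q x2) ∈ {p : ℝ × ℝ | 0 ≤ p.1 ∧ p.1 ≤ p.2} :=
    ⟨margX0X2Y_nonneg hQ x0 x2 y, margX0X2Y_le_margX2 hQ x0 x2 y⟩
  simp only [HcondYX0_X2, neg_neg, smul_eq_mul, mul_sum, ← sum_add_distrib]
  refine sum_le_sum fun x0 _ => sum_le_sum fun x2 _ => sum_le_sum fun y _ => ?_
  have h := convexOn_mul_log_div.2 (hmem hQ₁ x0 x2 y) (hmem hQ₂ x0 x2 y) ha hb hab
  simpa [margX0X2Y_smul_add_smul, margX2_smul_add_smul] using h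

end Entropy

section Admissible

variable {X0 X1 X2 Y : Type*} [Fintype X0] [Fintype X1] [Fintype X2] [Fintype Y]

lemma convex_setOf_isAdmissible (ρ : X0 → ℝ) (Γ : X1 → Y → ℝ) :
    Convex ℝ {Q : X0 × X1 × X2 × Y → ℝ | IsAdmissible ρ Γ Q} := by
  rintro Q₁ ⟨⟨h0₁, h1₁⟩, hρ₁, hΓ₁⟩ Q₂ ⟨⟨h0₂, h1₂⟩, hρ₂, hΓ₂⟩ a b ha hb hab
  refine ⟨⟨fun p => ?_, ?_⟩, fun x0 => ?_, fun x0 x1 x2 y => ?_⟩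
  · exact add_nonneg (mul_nonneg ha (h0₁ p)) (mul_nonneg hb (h0₂ p))
  · simp [sum_add_distrib, ← mul_sum, h1₁, h1₂, hab]
  · rw [margX0_smul_add_smul, hρ₁, hρ₂, ← add_mul, hab, one_mul]
  · simp only [margX0X1X2_smul_add_smul, Pi.add_apply, Pi.smul_apply, smul_eq_mul, hΓ₁, hΓ₂]
    ring

lemma Phi_eq_of_isAdmissible {ρ : X0 → ℝ} {Γ : X1 → Y → ℝ} {Q : X0 × X1 × X2 × Y → ℝ}
    (hQ : IsAdmissible ρ Γ Q) :
    Phi Q = -∑ x0, ρ x0 * log (ρ x0) - HcondYX0_X2 Q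
      - ∑ x0, ∑ x1, ∑ x2, ∑ y, Q (x0, x1, x2, y) * log (Γ x1 y) := by
  obtain ⟨⟨hQ, -⟩, hρ, hΓ⟩ := hQ
  rw [Phi_eq_H_X0_sub_HcondYX0_X2_add_HcondY_X0X1X2 hQ, HcondY_X0X1X2_eq_neg_sum_mul_log hΓ, H_X0]
  simp only [hρ]
  ring

lemma convexOn_Phi (ρ : X0 → ℝ) (Γ : X1 → Y → ℝ) :
    ConvexOn ℝ {Q : X0 × X1 × X2 × Y → ℝ | IsAdmissible ρ Γ Q} Phi := by
  have hs := convex_setOf_isAdmissible (X2 := X2) ρ Γ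
  have hent := convexOn_neg_HcondYX0_X2.subset (fun Q hQ => hQ.1.1) hs
  have hlin := (IsLinearMap.mk' _ (isLinearMap_sum_mul fun _ x1 _ y => log (Γ x1 y))).concaveOn hs
  refine (((convexOn_const (-∑ x0, ρ x0 * log (ρ x0)) hs).add hent).sub hlin).congr
    fun Q hQ => ?_
  simp only [Pi.add_apply, Pi.sub_apply, IsLinearMap.mk'_apply, Phi_eq_of_isAdmissible hQ]
  ring

end Admissible

theorem feasible_set_convex_and_objective_linear_general
    {X0 X1 X2 Y : Type*} [Fintype X0] [Fintype X1] [Fintype X2] [Fintype Y]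
    (ρ : X0 → ℝ) (Γ : X1 → Y → ℝ)
    (w : X0 → X1 → X2 → ℝ) :
    Convex ℝ {Q : X0 × X1 × X2 × Y → ℝ | IsAdmissible ρ Γ Q ∧ Phi Q ≤ 0} ∧
    IsLinearMap ℝ (fun Q : X0 × X1 × X2 × Y → ℝ =>
      ∑ x0, ∑ x1, ∑ x2, ∑ y, Q (x0, x1, x2, y) * w x0 x1 x2) :=
  ⟨(convexOn_Phi ρ Γ).convex_le 0, isLinearMap_sum_mul fun x0 x1 x2 _ => w x0 x1 x2⟩

/-- the feasible set of the optimization problem of Section III-B,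
i.e. the set of `(ρ, Γ)`-admissible pmfs satisfying the information constraint
`Φ(Q) ≤ 0`, is convex, and the expected payoff `E_Q[w]` is a linear function of `Q`;
hence maximizing `E_Q[w]` over this set is a convex optimization problem. -/
theorem feasible_set_convex_and_objective_linear
    {X0 X1 X2 Y : Type*} [Fintype X0] [Fintype X1] [Fintype X2] [Fintype Y]
    (ρ : X0 → ℝ) (hρ : IsPmf ρ) (Γ : X1 → Y → ℝ) (hΓ : IsChannel Γ)
    (w : X0 → X1 → X2 → ℝ) :
    Convex ℝ {Q : X0 × X1 × X2 × Y → ℝ | IsAdmissible ρ Γ Q ∧ Phi Q ≤ 0} ∧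
    IsLinearMap ℝ (fun Q : X0 × X1 × X2 × Y → ℝ =>
      ∑ x0, ∑ x1, ∑ x2, ∑ y, Q (x0, x1, x2, y) * w x0 x1 x2) :=
  feasible_set_convex_and_objective_linear_general ρ Γ w
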